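/- For β ∈ (0,1) and t > 0, the Mittag-Leffler density f_β(t) = ∫₀^∞ θe^{-θt}K_β(θ)dθ is strictly positive and strictly decreasing in t on (0,∞), and lim_{t→0⁺} f_β(t) = ∞. -/

import Mathlib

/-!
Writing the denominator of `K_β` as `(θ^β + cos βπ)² + sin² βπ` shows `0 < K_β(θ) ≤ θ^{β-1}/(π sin βπ)`,
so the integrand `θ e^{-θt} K_β(θ)` is positive, strictly decreasing in `t`, and dominated by
`θ^β e^{-tθ}`; positivity and strict monotonicity of `f_β` follow. For `θ ≥ 1` the denominator is
at most `4 θ^{2β}`, so on `[1, 1/t]` the integrand is at least `c θ^{-β}`, and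
`f_β(t) ≥ c ((1/t)^{1-β} - 1)/(1 - β) → ∞` as `t → 0⁺`.
-/

noncomputable def Kβ (β θ : ℝ) : ℝ :=
  (1 / Real.pi) * θ ^ (β - 1) * Real.sin (β * Real.pi) /
    (θ ^ (2 * β) + 2 * θ ^ β * Real.cos (β * Real.pi) + 1)

noncomputable def fβ (β t : ℝ) : ℝ := ∫ θ in Set.Ioi (0:ℝ), θ * Real.exp (-θ * t) * Kβ β θ

open Real MeasureTheory Set Filter Topology

lemma setIntegral_pos_of_forall_pos {α : Type*} [MeasurableSpace α] {μ : Measure α}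
    {s : Set α} {f : α → ℝ} (hs : MeasurableSet s) (hμs : μ s ≠ 0)
    (hf : IntegrableOn f s μ) (hpos : ∀ x ∈ s, 0 < f x) :
    0 < ∫ x in s, f x ∂μ := by
  rw [setIntegral_pos_iff_support_of_nonneg_ae ((ae_restrict_mem hs).mono fun x hx ↦
    (hpos x hx).le) hf]
  exact (pos_iff_ne_zero.2 hμs).trans_le (measure_mono fun x hx ↦ ⟨(hpos x hx).ne', hx⟩)

lemma setIntegral_lt_setIntegral_of_forall_lt {α : Type*} [MeasurableSpace α] {μ : Measure α}
    {s : Set α} {f g : α → ℝ} (hs : MeasurableSet s) (hμs : μ s ≠ 0)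
    (hf : IntegrableOn f s μ) (hg : IntegrableOn g s μ) (hlt : ∀ x ∈ s, f x < g x) :
    ∫ x in s, f x ∂μ < ∫ x in s, g x ∂μ := by
  have := setIntegral_pos_of_forall_pos (f := fun x ↦ g x - f x) hs hμs (hg.sub hf)
    fun x hx ↦ sub_pos.2 (hlt x hx)
  rwa [integral_sub hg hf, sub_pos] at this

noncomputable def fβIntegrand (β t θ : ℝ) : ℝ := θ * exp (-θ * t) * Kβ β θ

section

variable {β t θ : ℝ}

lemma sin_mul_pi_pos (hβ : β ∈ Ioo (0:ℝ) 1) : 0 < sin (β * π) :=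
  sin_pos_of_pos_of_lt_pi (mul_pos hβ.1 pi_pos) (by nlinarith [pi_pos, hβ.2])

lemma Kβ_denom_eq (hθ : 0 < θ) :
    θ ^ (2 * β) + 2 * θ ^ β * cos (β * π) + 1 = (θ ^ β + cos (β * π)) ^ 2 + sin (β * π) ^ 2 := by
  rw [mul_comm, rpow_mul hθ.le, rpow_two]
  linear_combination -sin_sq_add_cos_sq (β * π)

lemma Kβ_denom_ge (hθ : 0 < θ) :
    sin (β * π) ^ 2 ≤ θ ^ (2 * β) + 2 * θ ^ β * cos (β * π) + 1 := by
  rw [Kβ_denom_eq hθ]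
  exact le_add_of_nonneg_left (sq_nonneg _)

lemma Kβ_pos (hβ : β ∈ Ioo (0:ℝ) 1) (hθ : 0 < θ) : 0 < Kβ β θ := by
  have := sin_mul_pi_pos hβ
  exact div_pos (by positivity) ((pow_pos this 2).trans_le (Kβ_denom_ge hθ))

lemma Kβ_le (hβ : β ∈ Ioo (0:ℝ) 1) (hθ : 0 < θ) :
    Kβ β θ ≤ θ ^ (β - 1) / (π * sin (β * π)) := by
  have hs := sin_mul_pi_pos hβ
  calc Kβ β θ ≤ 1 / π * θ ^ (β - 1) * sin (β * π) / sin (β * π) ^ 2 :=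
        div_le_div_of_nonneg_left (by positivity) (by positivity) (Kβ_denom_ge hθ)
    _ = θ ^ (β - 1) / (π * sin (β * π)) := by field_simp

lemma Kβ_ge (hβ : β ∈ Ioo (0:ℝ) 1) (hθ : 1 ≤ θ) :
    sin (β * π) / (4 * π) * θ ^ (-β - 1) ≤ Kβ β θ := by
  have hθ0 : 0 < θ := one_pos.trans_le hθ
  have hs := sin_mul_pi_pos hβ
  have hθβ : 1 ≤ θ ^ β := one_le_rpow hθ hβ.1.le
  -- the denominator is at most `(θ ^ β + 1) ^ 2 ≤ 4 θ ^ (2β)`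
  have hden : θ ^ (2 * β) + 2 * θ ^ β * cos (β * π) + 1 ≤ 4 * θ ^ (2 * β) := by
    rw [mul_comm, rpow_mul hθ0.le, rpow_two]
    nlinarith [cos_le_one (β * π)]
  calc sin (β * π) / (4 * π) * θ ^ (-β - 1)
      = 1 / π * θ ^ (β - 1) * sin (β * π) / (4 * θ ^ (2 * β)) := by
        rw [show -β - 1 = (β - 1) - 2 * β by ring, rpow_sub hθ0]
        field_simp
    _ ≤ Kβ β θ := div_le_div_of_nonneg_left (by positivity)
        ((pow_pos hs 2).trans_le (Kβ_denom_ge hθ0)) hden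

lemma continuousOn_Kβ (hβ : β ∈ Ioo (0:ℝ) 1) : ContinuousOn (Kβ β) (Ioi 0) := by
  have hrpow (p : ℝ) : ContinuousOn (fun θ : ℝ ↦ θ ^ p) (Ioi 0) :=
    continuousOn_id.rpow_const fun x hx ↦ Or.inl (ne_of_gt hx)
  refine ContinuousOn.div (by fun_prop) (by fun_prop) fun x hx ↦ ?_
  exact ((pow_pos (sin_mul_pi_pos hβ) 2).trans_le (Kβ_denom_ge hx)).ne'

lemma fβIntegrand_pos (hβ : β ∈ Ioo (0:ℝ) 1) (hθ : 0 < θ) : 0 < fβIntegrand β t θ :=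
  mul_pos (mul_pos hθ (exp_pos _)) (Kβ_pos hβ hθ)

lemma fβIntegrand_lt_of_lt (hβ : β ∈ Ioo (0:ℝ) 1) (hθ : 0 < θ) {s : ℝ} (hts : t < s) :
    fβIntegrand β s θ < fβIntegrand β t θ := by
  unfold fβIntegrand
  exact mul_lt_mul_of_pos_right
    (mul_lt_mul_of_pos_left (exp_lt_exp.2 (by nlinarith)) hθ) (Kβ_pos hβ hθ)

lemma fβIntegrand_le (hβ : β ∈ Ioo (0:ℝ) 1) (hθ : 0 < θ) :
    fβIntegrand β t θ ≤ 1 / (π * sin (β * π)) * (θ ^ β * exp (-t * θ)) := by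
  calc fβIntegrand β t θ ≤ θ * exp (-θ * t) * (θ ^ (β - 1) / (π * sin (β * π))) := by
        unfold fβIntegrand
        gcongr
        exact Kβ_le hβ hθ
    _ = 1 / (π * sin (β * π)) * (θ * θ ^ (β - 1) * exp (-t * θ)) := by ring_nf
    _ = 1 / (π * sin (β * π)) * (θ ^ β * exp (-t * θ)) := by
        rw [← rpow_one_add' hθ.le (by linarith [hβ.1]), add_sub_cancel]

lemma integrableOn_fβIntegrand (hβ : β ∈ Ioo (0:ℝ) 1) (ht : 0 < t) :
    IntegrableOn (fβIntegrand β t) (Ioi 0) := by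
  have hmaj : IntegrableOn (fun θ : ℝ ↦ θ ^ β * exp (-t * θ)) (Ioi 0) := by
    simpa using integrableOn_rpow_mul_exp_neg_mul_rpow (by linarith [hβ.1]) one_pos ht
  refine (hmaj.const_mul (1 / (π * sin (β * π)))).mono' ?_ ?_
  · refine ContinuousOn.aestronglyMeasurable ?_ measurableSet_Ioi
    exact (continuousOn_id.mul (by fun_prop)).mul (continuousOn_Kβ hβ)
  · filter_upwards [ae_restrict_mem measurableSet_Ioi] with θ hθ
    rw [norm_of_nonneg (fβIntegrand_pos hβ hθ).le]
    exact fβIntegrand_le hβ hθ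

lemma fβIntegrand_ge (hβ : β ∈ Ioo (0:ℝ) 1) (ht : 0 < t) (hθ : θ ∈ Icc 1 t⁻¹) :
    sin (β * π) / (4 * π) * exp (-1) * θ ^ (-β) ≤ fβIntegrand β t θ := by
  have hθ0 : 0 < θ := one_pos.trans_le hθ.1
  have hθt : θ * t ≤ 1 := (le_div_iff₀ ht).1 (by simpa using hθ.2)
  calc sin (β * π) / (4 * π) * exp (-1) * θ ^ (-β)
      = θ * exp (-1) * (sin (β * π) / (4 * π) * θ ^ (-β - 1)) := by
        rw [rpow_sub hθ0, rpow_one]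
        field_simp
    _ ≤ fβIntegrand β t θ := by
        unfold fβIntegrand
        have := sin_mul_pi_pos hβ
        gcongr
        · linarith
        · exact Kβ_ge hβ hθ.1

lemma fβ_pos (hβ : β ∈ Ioo (0:ℝ) 1) (ht : 0 < t) : 0 < fβ β t :=
  setIntegral_pos_of_forall_pos measurableSet_Ioi (by simp) (integrableOn_fβIntegrand hβ ht)
    fun _ hθ ↦ fβIntegrand_pos hβ hθ

lemma fβ_strictAntiOn (hβ : β ∈ Ioo (0:ℝ) 1) : StrictAntiOn (fβ β) (Ioi 0) :=
  fun _ hs _ ht hst ↦ setIntegral_lt_setIntegral_of_forall_lt measurableSet_Ioi (by simp)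
    (integrableOn_fβIntegrand hβ ht) (integrableOn_fβIntegrand hβ hs)
    fun _ hθ ↦ fβIntegrand_lt_of_lt hβ hθ hst

lemma fβ_ge (hβ : β ∈ Ioo (0:ℝ) 1) (ht : t ∈ Ioo (0:ℝ) 1) :
    sin (β * π) / (4 * π) * exp (-1) * ((t⁻¹ ^ (1 - β) - 1) / (1 - β)) ≤ fβ β t := by
  have hT : 1 ≤ t⁻¹ := (one_le_inv₀ ht.1).2 ht.2.le
  have hsub : Ioc 1 t⁻¹ ⊆ Ioi (0:ℝ) := fun θ hθ ↦ one_pos.trans hθ.1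
  have hint := integrableOn_fβIntegrand hβ ht.1
  calc sin (β * π) / (4 * π) * exp (-1) * ((t⁻¹ ^ (1 - β) - 1) / (1 - β))
      = ∫ θ in (1:ℝ)..t⁻¹, sin (β * π) / (4 * π) * exp (-1) * θ ^ (-β) := by
        rw [intervalIntegral.integral_const_mul, integral_rpow (Or.inl (by linarith [hβ.2])),
          one_rpow, neg_add_eq_sub]
    _ ≤ ∫ θ in (1:ℝ)..t⁻¹, fβIntegrand β t θ := by
        refine intervalIntegral.integral_mono_on hT ?_ ?_ fun θ hθ ↦ fβIntegrand_ge hβ ht.1 hθ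
        · exact (intervalIntegral.intervalIntegrable_rpow' (by linarith [hβ.2])).const_mul _
        · exact (intervalIntegrable_iff_integrableOn_Ioc_of_le hT).2 (hint.mono_set hsub)
    _ ≤ fβ β t := by
        rw [intervalIntegral.integral_of_le hT]
        exact setIntegral_mono_set hint
          ((ae_restrict_mem measurableSet_Ioi).mono fun θ hθ ↦ (fβIntegrand_pos hβ hθ).le)
          hsub.eventuallyLE

lemma tendsto_fβ_nhdsGT_zero (hβ : β ∈ Ioo (0:ℝ) 1) : Tendsto (fβ β) (𝓝[>] 0) atTop := by
  have hc : 0 < sin (β * π) / (4 * π) * exp (-1) := by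
    have := sin_mul_pi_pos hβ
    positivity
  have hβ' : 0 < 1 - β := sub_pos.2 hβ.2
  have hbound : Tendsto (fun t : ℝ ↦ sin (β * π) / (4 * π) * exp (-1) *
      ((t⁻¹ ^ (1 - β) - 1) / (1 - β))) (𝓝[>] 0) atTop :=
    ((tendsto_atTop_add_const_right _ (-1)
      ((tendsto_rpow_atTop hβ').comp tendsto_inv_nhdsGT_zero)).atTop_div_const hβ').const_mul_atTop
      hc
  refine tendsto_atTop_mono' _ ?_ hbound
  filter_upwards [Ioo_mem_nhdsGT one_pos] with t ht
  exact fβ_ge hβ ht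

end

theorem fβ_pos_strictAnti_blowup (β : ℝ) (hβ : β ∈ Set.Ioo (0:ℝ) 1) :
    (∀ t ∈ Set.Ioi (0:ℝ), 0 < fβ β t) ∧
    StrictAntiOn (fβ β) (Set.Ioi (0:ℝ)) ∧
    Filter.Tendsto (fβ β) (nhdsWithin 0 (Set.Ioi 0)) Filter.atTop :=
  ⟨fun _ ht ↦ fβ_pos hβ ht, fβ_strictAntiOn hβ, tendsto_fβ_nhdsGT_zero hβ⟩
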